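/- For the smooth integral-type projection Π̃_η f(x) = (∫f dx − I(f)) + ∫_0^x g̃(ξ)dξ, where g̃ = Σ_i f'(a_i) φ_i and I(f) = Σ_i f'(a_i) ∫_0^1(∫_0^x φ_i dξ) dx, and f ∈ C^2([0,1]): (1) ‖f' − g̃‖_∞ ≤ ‖f''‖_∞/m; (2) ‖Π̃_η f − f‖_∞ ≤ ‖f''‖_∞/m; (3) ‖Π̃_η f − f‖_{C^1} ≤ 3‖f''‖_∞/m; (4) ∫_0^1 Π̃_η f dx = ∫_0^1 f dx; (5) ‖Π̃_η f‖_{C^2} ≤ 5‖f‖_{C^2}. -/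

import Mathlib

/-!
Write `φ` for the Hermite bump and `cᵢ = f'(i/m)`. On the cell `[j/m, (j+1)/m]` only the bumps of
the nodes `j` and `j + 1` are nonzero, and with `s = m x - j` we have `φ(s) + φ(s - 1) = 1`, so
`g̃(x)` is a convex combination of `cⱼ` and `cⱼ₊₁`, each within `‖f''‖_∞ / m` of `f'(x)` by the
mean value theorem. This gives (1) and `‖g̃‖_∞ ≤ ‖f'‖_∞`. Similarly `φ'(s) + φ'(s - 1) = 0` turns
`g̃'(x)` into `m (cⱼ₊₁ - cⱼ) φ'(s - 1)`, and `|φ'| ≤ 3/2` bounds it by `(3/2) ‖f''‖_∞`.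
The constant in `Π̃_η f` is exactly what makes (4) hold, so `Π̃_η f - f` has mean zero on `[0, 1]`
and derivative `g̃ - f'`; a mean-zero function on `[0, 1]` is bounded by the sup of its
derivative, which gives (2). Then (3) and (5) follow by adding up.
-/

open Set

lemma hasDerivWithinAt_of_eqOn_of_isClosed {f g g' : ℝ → ℝ} {s : Set ℝ} (hs : IsClosed s)
    (hfg : EqOn f g s) (hg : ∀ y ∈ s, HasDerivAt g (g' y) y) (x : ℝ) :
    HasDerivWithinAt f (g' x) s x := by
  by_cases hx : x ∈ s
  · exact (hg x hx).hasDerivWithinAt.congr hfg (hfg hx)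
  · exact HasFDerivWithinAt.of_notMem_closure (by rwa [hs.closure_eq])

noncomputable def twoPiece (p q : ℝ → ℝ) (x : ℝ) : ℝ :=
  if x < -1 then 0 else if x ≤ 0 then p x else if x ≤ 1 then q x else 0

namespace twoPiece

variable {p q : ℝ → ℝ}

lemma eqOn_Iic (hp : p (-1) = 0) : EqOn (twoPiece p q) 0 (Iic (-1)) := by
  intro x (hx : x ≤ -1)
  rcases hx.lt_or_eq with hx | rfl
  · simp [twoPiece, hx]
  · simp [twoPiece, hp]

lemma eqOn_Icc_neg : EqOn (twoPiece p q) p (Icc (-1) 0) := by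
  rintro x ⟨h₁, h₂⟩
  simp [twoPiece, h₁.not_gt, h₂]

lemma eqOn_Icc_pos (h₀ : p 0 = q 0) : EqOn (twoPiece p q) q (Icc 0 1) := by
  rintro x ⟨h₁, h₂⟩
  rcases h₁.lt_or_eq with h₁ | rfl
  · simp [twoPiece, h₂, h₁.not_ge, (show ¬ x < -1 by linarith)]
  · simp [twoPiece, h₀]

lemma eqOn_Ici (hq : q 1 = 0) : EqOn (twoPiece p q) 0 (Ici 1) := by
  intro x (hx : 1 ≤ x)
  rcases hx.lt_or_eq with hx | rfl
  · simp [twoPiece, hx.not_ge, (show ¬ x < -1 by linarith), (show ¬ x ≤ 0 by linarith)]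
  · simp [twoPiece, hq]

lemma eq_zero_of_one_le_abs (hp : p (-1) = 0) (hq : q 1 = 0) {x : ℝ} (hx : 1 ≤ |x|) :
    twoPiece p q x = 0 := by
  rcases le_abs'.mp hx with hx | hx
  · exact eqOn_Iic hp hx
  · exact eqOn_Ici hq hx

lemma apply_add_apply_sub_one (h₀ : p 0 = q 0) {s : ℝ} (hs : s ∈ Icc 0 1) :
    twoPiece p q s + twoPiece p q (s - 1) = q s + p (s - 1) := by
  rw [eqOn_Icc_pos h₀ hs, eqOn_Icc_neg ⟨by linarith [hs.1], by linarith [hs.2]⟩]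

variable {p' q' : ℝ → ℝ}

lemma hasDerivAt (hp : ∀ x, HasDerivAt p (p' x) x) (hq : ∀ x, HasDerivAt q (q' x) x)
    (hp₁ : p (-1) = 0) (hp'₁ : p' (-1) = 0) (h₀ : p 0 = q 0) (h₀' : p' 0 = q' 0)
    (hq₁ : q 1 = 0) (hq'₁ : q' 1 = 0) (x : ℝ) :
    HasDerivAt (twoPiece p q) (twoPiece p' q' x) x := by
  have h₁ : HasDerivWithinAt (twoPiece p q) (twoPiece p' q' x) (Iic (-1)) x :=
    hasDerivWithinAt_of_eqOn_of_isClosed isClosed_Iic (eqOn_Iic hp₁)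
      (fun y hy => by rw [eqOn_Iic hp'₁ hy]; exact hasDerivAt_const y 0) x
  have h₂ : HasDerivWithinAt (twoPiece p q) (twoPiece p' q' x) (Icc (-1) 0) x :=
    hasDerivWithinAt_of_eqOn_of_isClosed isClosed_Icc eqOn_Icc_neg
      (fun y hy => by rw [eqOn_Icc_neg hy]; exact hp y) x
  have h₃ : HasDerivWithinAt (twoPiece p q) (twoPiece p' q' x) (Icc 0 1) x :=
    hasDerivWithinAt_of_eqOn_of_isClosed isClosed_Icc (eqOn_Icc_pos h₀)
      (fun y hy => by rw [eqOn_Icc_pos h₀' hy]; exact hq y) x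
  have h₄ : HasDerivWithinAt (twoPiece p q) (twoPiece p' q' x) (Ici 1) x :=
    hasDerivWithinAt_of_eqOn_of_isClosed isClosed_Ici (eqOn_Ici hq₁)
      (fun y hy => by rw [eqOn_Ici hq'₁ hy]; exact hasDerivAt_const y 0) x
  have hcover : Iic (-1) ∪ Icc (-1) 0 ∪ Icc 0 1 ∪ Ici (1 : ℝ) = univ := by
    ext y; simp only [mem_union, mem_Iic, mem_Icc, mem_Ici, mem_univ, iff_true]; grind
  have := ((h₁.union h₂).union h₃).union h₄
  rwa [hcover, hasDerivWithinAt_univ] at this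

end twoPiece

noncomputable def hermiteBump : ℝ → ℝ :=
  twoPiece (fun x => 1 - 3 * x ^ 2 - 2 * x ^ 3) (fun x => 1 - 3 * x ^ 2 + 2 * x ^ 3)

noncomputable def hermiteBumpDeriv : ℝ → ℝ :=
  twoPiece (fun x => -6 * x - 6 * x ^ 2) (fun x => -6 * x + 6 * x ^ 2)

lemma hasDerivAt_hermiteBump (x : ℝ) : HasDerivAt hermiteBump (hermiteBumpDeriv x) x := by
  refine twoPiece.hasDerivAt (fun y => ?_) (fun y => ?_) (by norm_num) (by norm_num)
    (by norm_num) (by norm_num) (by norm_num) (by norm_num) x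
  · refine (((hasDerivAt_pow 2 y).const_mul 3).const_sub 1 |>.sub
      ((hasDerivAt_pow 3 y).const_mul 2)).congr_deriv ?_
    push_cast; ring
  · refine (((hasDerivAt_pow 2 y).const_mul 3).const_sub 1 |>.add
      ((hasDerivAt_pow 3 y).const_mul 2)).congr_deriv ?_
    push_cast; ring

@[fun_prop]
lemma continuous_hermiteBump : Continuous hermiteBump :=
  continuous_iff_continuousAt.mpr fun x => (hasDerivAt_hermiteBump x).continuousAt

lemma hermiteBump_nonneg (x : ℝ) : 0 ≤ hermiteBump x := by
  simp only [hermiteBump, twoPiece]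
  split_ifs with _ h₂
  · exact le_rfl
  · nlinarith [mul_nonneg (sq_nonneg (1 + x)) (by linarith : (0:ℝ) ≤ 1 - 2 * x)]
  · nlinarith [mul_nonneg (sq_nonneg (1 - x)) (by linarith [not_le.mp h₂] : (0:ℝ) ≤ 1 + 2 * x)]
  · exact le_rfl

lemma abs_hermiteBumpDeriv_le (x : ℝ) : |hermiteBumpDeriv x| ≤ 3 / 2 := by
  simp only [hermiteBumpDeriv, twoPiece]
  split_ifs <;> rw [abs_le] <;> (try push Not at *) <;> constructor <;>
    nlinarith [sq_nonneg (2 * x + 1), sq_nonneg (2 * x - 1)]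

lemma hermiteBump_eq_zero_of_one_le_abs {x : ℝ} (hx : 1 ≤ |x|) : hermiteBump x = 0 :=
  twoPiece.eq_zero_of_one_le_abs (by norm_num) (by norm_num) hx

lemma hermiteBumpDeriv_eq_zero_of_one_le_abs {x : ℝ} (hx : 1 ≤ |x|) : hermiteBumpDeriv x = 0 :=
  twoPiece.eq_zero_of_one_le_abs (by norm_num) (by norm_num) hx

lemma hermiteBump_add_hermiteBump_sub_one {s : ℝ} (hs : s ∈ Icc 0 1) :
    hermiteBump s + hermiteBump (s - 1) = 1 := by
  rw [hermiteBump, twoPiece.apply_add_apply_sub_one (by norm_num) hs]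
  ring

lemma hermiteBumpDeriv_add_hermiteBumpDeriv_sub_one {s : ℝ} (hs : s ∈ Icc 0 1) :
    hermiteBumpDeriv s + hermiteBumpDeriv (s - 1) = 0 := by
  rw [hermiteBumpDeriv, twoPiece.apply_add_apply_sub_one (by norm_num) hs]
  ring

lemma exists_sub_natCast_mem_Icc {m : ℕ} (hm : 0 < m) {y : ℝ} (hy : y ∈ Icc 0 (m : ℝ)) :
    ∃ j < m, y - j ∈ Icc (0 : ℝ) 1 := by
  rcases hy.2.lt_or_eq with hlt | rfl
  · refine ⟨⌊y⌋₊, (Nat.floor_lt hy.1).mpr hlt, ?_, ?_⟩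
    · linarith [Nat.floor_le hy.1]
    · linarith [Nat.lt_floor_add_one y]
  · refine ⟨m - 1, by omega, ?_⟩
    rw [Nat.cast_sub hm, Nat.cast_one]
    norm_num

lemma sum_range_eq_of_sub_natCast_mem_Icc {g : ℝ → ℝ} (hg : ∀ t, 1 ≤ |t| → g t = 0)
    (c : ℕ → ℝ) {m j : ℕ} (hj : j < m) {y : ℝ} (hy : y - j ∈ Icc (0 : ℝ) 1) :
    ∑ i ∈ Finset.range (m + 1), c i * g (y - i) = c j * g (y - j) + c (j + 1) * g (y - j - 1) := by
  rw [Finset.sum_eq_add j (j + 1) (by omega) ?_ (by simp; omega) (by simp; omega)]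
  · push_cast; ring_nf
  · intro i _ ⟨hij, hij'⟩
    rw [hg _ ?_, mul_zero]
    rcases lt_or_gt_of_ne hij with h | h
    · have : (i : ℝ) + 1 ≤ j := by exact_mod_cast h
      rw [abs_of_nonneg (by linarith [hy.1])]
      linarith [hy.1]
    · have : (j : ℝ) + 2 ≤ i := by exact_mod_cast (by omega : j + 2 ≤ i)
      rw [abs_of_nonpos (by linarith [hy.2])]
      linarith [hy.2]

lemma natCast_mul_mem_Icc {m : ℕ} {x : ℝ} (hx : x ∈ Icc (0 : ℝ) 1) :
    (m : ℝ) * x ∈ Icc 0 (m : ℝ) :=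
  ⟨mul_nonneg m.cast_nonneg hx.1, mul_le_of_le_one_right m.cast_nonneg hx.2⟩

noncomputable def hermiteInterp (m : ℕ) (c : ℕ → ℝ) (x : ℝ) : ℝ :=
  ∑ i ∈ Finset.range (m + 1), c i * hermiteBump (m * x - i)

namespace hermiteInterp

lemma hasDerivAt {m : ℕ} (c : ℕ → ℝ) (x : ℝ) :
    HasDerivAt (hermiteInterp m c)
      (∑ i ∈ Finset.range (m + 1), c i * (m * hermiteBumpDeriv (m * x - i))) x := by
  refine HasDerivAt.fun_sum fun i _ => HasDerivAt.const_mul (c i) ?_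
  have hlin : HasDerivAt (fun x : ℝ => (m : ℝ) * x - i) m x := by
    simpa using ((hasDerivAt_id x).const_mul (m : ℝ)).sub_const (i : ℝ)
  exact ((hasDerivAt_hermiteBump _).comp x hlin).congr_deriv (mul_comm _ _)

lemma continuous (m : ℕ) (c : ℕ → ℝ) : Continuous (hermiteInterp m c) :=
  continuous_iff_continuousAt.mpr fun x => (hasDerivAt c x).continuousAt

lemma abs_sub_le {m : ℕ} {c : ℕ → ℝ} (hm : 0 < m) {x : ℝ} (hx : x ∈ Icc (0 : ℝ) 1) {d C : ℝ}
    (hc : ∀ i ≤ m, |(m : ℝ) * x - i| ≤ 1 → |d - c i| ≤ C) :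
    |d - hermiteInterp m c x| ≤ C := by
  obtain ⟨j, hj, hs⟩ := exists_sub_natCast_mem_Icc hm (natCast_mul_mem_Icc hx)
  have hcj : c j ∈ Metric.closedBall d C := by
    rw [Metric.mem_closedBall', Real.dist_eq]
    exact hc j hj.le (by rw [abs_of_nonneg hs.1]; exact hs.2)
  have hcj' : c (j + 1) ∈ Metric.closedBall d C := by
    rw [Metric.mem_closedBall', Real.dist_eq]
    exact hc (j + 1) hj (by push_cast; rw [abs_le]; constructor <;> linarith [hs.1, hs.2])
  have hmem := convex_closedBall d C hcj hcj' (hermiteBump_nonneg _) (hermiteBump_nonneg _)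
    (hermiteBump_add_hermiteBump_sub_one hs)
  rw [Metric.mem_closedBall', Real.dist_eq, smul_eq_mul, smul_eq_mul] at hmem
  rw [hermiteInterp, sum_range_eq_of_sub_natCast_mem_Icc
    (fun _ => hermiteBump_eq_zero_of_one_le_abs) c hj hs]
  simpa only [mul_comm] using hmem

lemma abs_deriv_le {m : ℕ} {c : ℕ → ℝ} (hm : 0 < m) {x : ℝ} (hx : x ∈ Icc (0 : ℝ) 1) {C : ℝ}
    (hc : ∀ i < m, |c (i + 1) - c i| ≤ C) :
    |deriv (hermiteInterp m c) x| ≤ 3 / 2 * m * C := by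
  obtain ⟨j, hj, hs⟩ := exists_sub_natCast_mem_Icc hm (natCast_mul_mem_Icc hx)
  rw [(hasDerivAt c x).deriv, sum_range_eq_of_sub_natCast_mem_Icc
    (g := fun t => m * hermiteBumpDeriv t)
    (fun _ ht => by rw [hermiteBumpDeriv_eq_zero_of_one_le_abs ht, mul_zero]) c hj hs]
  set s := (m : ℝ) * x - j
  have hsum := hermiteBumpDeriv_add_hermiteBumpDeriv_sub_one hs
  calc |c j * (m * hermiteBumpDeriv s) + c (j + 1) * (m * hermiteBumpDeriv (s - 1))|
      = |m * ((c (j + 1) - c j) * hermiteBumpDeriv (s - 1))| := by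
        congr 1
        linear_combination (m * c j) * hsum
    _ = m * (|c (j + 1) - c j| * |hermiteBumpDeriv (s - 1)|) := by
        rw [abs_mul, abs_mul, abs_of_nonneg m.cast_nonneg]
    _ ≤ m * (C * (3 / 2)) := by
        gcongr
        · exact (abs_nonneg _).trans (hc j hj)
        · exact hc j hj
        · exact abs_hermiteBumpDeriv_le _
    _ = 3 / 2 * m * C := by ring

lemma integral_eq_sum (m : ℕ) (c : ℕ → ℝ) (a b : ℝ) :
    ∫ t in a..b, hermiteInterp m c t =
      ∑ i ∈ Finset.range (m + 1), c i * ∫ t in a..b, hermiteBump (m * t - i) := by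
  have hint (i : ℕ) : IntervalIntegrable
      (fun t => c i * hermiteBump (m * t - i)) MeasureTheory.volume a b :=
    Continuous.intervalIntegrable (by fun_prop) a b
  unfold hermiteInterp
  rw [intervalIntegral.integral_finsetSum fun i _ => hint i]
  simp only [intervalIntegral.integral_const_mul]

lemma integral_integral_eq_sum (m : ℕ) (c : ℕ → ℝ) (a b : ℝ) :
    ∫ x in a..b, ∫ t in a..x, hermiteInterp m c t =
      ∑ i ∈ Finset.range (m + 1), c i * ∫ x in a..b, ∫ t in a..x, hermiteBump (m * t - i) := by
  have hint (i : ℕ) : IntervalIntegrable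
      (fun x => c i * ∫ t in a..x, hermiteBump (m * t - i)) MeasureTheory.volume a b :=
    (continuous_const.mul (intervalIntegral.continuous_primitive (fun _ _ =>
      Continuous.intervalIntegrable (by fun_prop) _ _) a)).intervalIntegrable a b
  simp only [integral_eq_sum]
  rw [intervalIntegral.integral_finsetSum fun i _ => hint i]
  simp only [intervalIntegral.integral_const_mul]

end hermiteInterp

noncomputable def unitSupNorm (g : ℝ → ℝ) : ℝ := ⨆ x ∈ Icc (0 : ℝ) 1, |g x|

lemma unitSupNorm_nonneg (g : ℝ → ℝ) : 0 ≤ unitSupNorm g :=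
  Real.iSup_nonneg fun _ => Real.iSup_nonneg fun _ => abs_nonneg _

lemma unitSupNorm_le {g : ℝ → ℝ} {C : ℝ} (hC : 0 ≤ C) (h : ∀ x ∈ Icc (0 : ℝ) 1, |g x| ≤ C) :
    unitSupNorm g ≤ C :=
  Real.iSup_le (fun x => Real.iSup_le (h x) hC) hC

lemma abs_le_unitSupNorm {g : ℝ → ℝ} (hg : ContinuousOn g (Icc 0 1)) {x : ℝ}
    (hx : x ∈ Icc (0 : ℝ) 1) : |g x| ≤ unitSupNorm g := by
  obtain ⟨C, hC⟩ := isCompact_Icc.exists_bound_of_continuousOn hg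
  have hbdd : BddAbove (range fun y => ⨆ _ : y ∈ Icc (0 : ℝ) 1, |g y|) := by
    refine ⟨max C 0, ?_⟩
    rintro _ ⟨y, rfl⟩
    exact Real.iSup_le (fun hy => (hC y hy).trans (le_max_left _ _)) (le_max_right _ _)
  calc |g x| = ⨆ _ : x ∈ Icc (0 : ℝ) 1, |g x| := (ciSup_pos (f := fun _ => |g x|) hx).symm
    _ ≤ unitSupNorm g := le_ciSup hbdd x

lemma abs_le_mul_of_integral_eq_zero {h h' : ℝ → ℝ} {a b L : ℝ} (hab : a < b)
    (hd : ∀ x ∈ Icc a b, HasDerivWithinAt h (h' x) (Icc a b) x)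
    (hL : ∀ x ∈ Icc a b, |h' x| ≤ L) (hint : ∫ t in a..b, h t = 0) {x : ℝ}
    (hx : x ∈ Icc a b) : |h x| ≤ L * (b - a) := by
  have hL₀ : 0 ≤ L := (abs_nonneg _).trans (hL a (left_mem_Icc.mpr hab.le))
  have hcont : ContinuousOn h (Icc a b) := fun y hy => (hd y hy).continuousWithinAt
  have hosc : ∀ t ∈ Icc a b, |h x - h t| ≤ L * (b - a) := fun t ht => by
    calc |h x - h t| ≤ L * |x - t| :=
          (convex_Icc a b).norm_image_sub_le_of_norm_hasDerivWithin_le hd hL ht hx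
      _ ≤ L * (b - a) := by
          gcongr
          rw [abs_le]
          constructor <;> linarith [hx.1, hx.2, ht.1, ht.2]
  have hmean : (b - a) * h x = ∫ t in a..b, (h x - h t) := by
    rw [intervalIntegral.integral_sub intervalIntegrable_const
      (hcont.intervalIntegrable_of_Icc hab.le), intervalIntegral.integral_const, hint]
    simp
  have : (b - a) * |h x| ≤ (b - a) * (L * (b - a)) := by
    calc (b - a) * |h x| = |∫ t in a..b, (h x - h t)| := by
          rw [← hmean, abs_mul, abs_of_pos (sub_pos.mpr hab)]
      _ ≤ L * (b - a) * |b - a| := by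
          refine intervalIntegral.norm_integral_le_of_norm_le_const
            (f := fun t => h x - h t) fun t ht => ?_
          rw [uIoc_of_le hab.le] at ht
          exact hosc t (Ioc_subset_Icc_self ht)
      _ = (b - a) * (L * (b - a)) := by rw [abs_of_pos (sub_pos.mpr hab)]; ring
  exact le_of_mul_le_mul_left this (sub_pos.mpr hab)

lemma natCast_div_mem_Icc {i m : ℕ} (h : i ≤ m) : (i : ℝ) / m ∈ Icc (0 : ℝ) 1 :=
  ⟨by positivity, div_le_one_of_le₀ (by exact_mod_cast h) m.cast_nonneg⟩

section ContDiffTwo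

variable {f : ℝ → ℝ} {m : ℕ}

lemma abs_deriv_sub_deriv_le (hf : ContDiff ℝ 2 f) {x y : ℝ} (hx : x ∈ Icc (0 : ℝ) 1)
    (hy : y ∈ Icc (0 : ℝ) 1) :
    |deriv f x - deriv f y| ≤ unitSupNorm (deriv (deriv f)) * |x - y| := by
  have hf' : ContDiff ℝ 1 (deriv f) := hf.deriv'
  exact (convex_Icc 0 1).norm_image_sub_le_of_norm_deriv_le
    (fun _ _ => hf'.differentiable one_ne_zero _)
    (fun _ hz => abs_le_unitSupNorm (hf'.continuous_deriv le_rfl).continuousOn hz) hy hx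

lemma abs_deriv_sub_hermiteInterp_le (hf : ContDiff ℝ 2 f) (hm : 0 < m) {x : ℝ}
    (hx : x ∈ Icc (0 : ℝ) 1) :
    |deriv f x - hermiteInterp m (fun i : ℕ => deriv f (i / m)) x| ≤
      unitSupNorm (deriv (deriv f)) / m := by
  refine hermiteInterp.abs_sub_le hm hx fun i hi hxi => ?_
  have hm' : (0 : ℝ) < m := by exact_mod_cast hm
  calc |deriv f x - deriv f (i / m)| ≤ unitSupNorm (deriv (deriv f)) * |x - i / m| :=
        abs_deriv_sub_deriv_le hf hx (natCast_div_mem_Icc hi)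
    _ = unitSupNorm (deriv (deriv f)) * |m * x - i| / m := by
        rw [show x - i / m = (m * x - i) / m by field_simp, abs_div, abs_of_pos hm', mul_div_assoc]
    _ ≤ unitSupNorm (deriv (deriv f)) * 1 / m := by gcongr; exact unitSupNorm_nonneg _
    _ = unitSupNorm (deriv (deriv f)) / m := by rw [mul_one]

lemma unitSupNorm_hermiteInterp_le (hf : ContDiff ℝ 2 f) (hm : 0 < m) :
    unitSupNorm (hermiteInterp m (fun i : ℕ => deriv f (i / m))) ≤ unitSupNorm (deriv f) := by
  have hf' : Continuous (deriv f) := hf.continuous_deriv one_le_two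
  refine unitSupNorm_le (unitSupNorm_nonneg _) fun x hx => ?_
  simpa using hermiteInterp.abs_sub_le hm hx (d := 0) fun i hi _ => by
    simpa using abs_le_unitSupNorm hf'.continuousOn (natCast_div_mem_Icc hi)

lemma unitSupNorm_deriv_hermiteInterp_le (hf : ContDiff ℝ 2 f) (hm : 0 < m) :
    unitSupNorm (deriv (hermiteInterp m (fun i : ℕ => deriv f (i / m)))) ≤
      3 / 2 * unitSupNorm (deriv (deriv f)) := by
  have hm' : (0 : ℝ) < m := by exact_mod_cast hm
  refine unitSupNorm_le (by positivity [unitSupNorm_nonneg (deriv (deriv f))]) fun x hx => ?_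
  calc _ ≤ 3 / 2 * m * (unitSupNorm (deriv (deriv f)) / m) := by
        refine hermiteInterp.abs_deriv_le hm hx fun i hi => ?_
        have := abs_deriv_sub_deriv_le hf (natCast_div_mem_Icc hi) (natCast_div_mem_Icc hi.le)
        push_cast at this ⊢
        rwa [← sub_div, add_sub_cancel_left, abs_of_pos (one_div_pos.mpr hm'), mul_one_div] at this
    _ = 3 / 2 * unitSupNorm (deriv (deriv f)) := by field_simp

end ContDiffTwo

noncomputable def smoothProjection (m : ℕ) (f : ℝ → ℝ) (x : ℝ) : ℝ :=
  ((∫ t in (0 : ℝ)..1, f t) - ∑ i ∈ Finset.range (m + 1),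
      deriv f (i / m) * ∫ x in (0 : ℝ)..1, ∫ t in (0 : ℝ)..x, hermiteBump (m * t - i)) +
    ∫ t in (0 : ℝ)..x, hermiteInterp m (fun i : ℕ => deriv f (i / m)) t

namespace smoothProjection

lemma hasDerivAt (m : ℕ) (f : ℝ → ℝ) (x : ℝ) :
    HasDerivAt (smoothProjection m f) (hermiteInterp m (fun i : ℕ => deriv f (i / m)) x) x :=
  ((hermiteInterp.continuous _ _).integral_hasStrictDerivAt 0 x).hasDerivAt.const_add _

lemma continuous (m : ℕ) (f : ℝ → ℝ) : Continuous (smoothProjection m f) :=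
  continuous_iff_continuousAt.mpr fun x => (hasDerivAt m f x).continuousAt

lemma integral_eq (m : ℕ) (f : ℝ → ℝ) :
    ∫ t in (0 : ℝ)..1, smoothProjection m f t = ∫ t in (0 : ℝ)..1, f t := by
  have hprim : Continuous fun x =>
      ∫ t in (0 : ℝ)..x, hermiteInterp m (fun i : ℕ => deriv f (i / m)) t :=
    intervalIntegral.continuous_primitive
      (fun _ _ => (hermiteInterp.continuous _ _).intervalIntegrable _ _) 0
  unfold smoothProjection
  rw [intervalIntegral.integral_add intervalIntegrable_const (hprim.intervalIntegrable 0 1),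
    hermiteInterp.integral_integral_eq_sum, intervalIntegral.integral_const]
  simp

variable {f : ℝ → ℝ} {m : ℕ}

lemma abs_sub_le (hf : ContDiff ℝ 2 f) (hm : 0 < m) {x : ℝ} (hx : x ∈ Icc (0 : ℝ) 1) :
    |smoothProjection m f x - f x| ≤ unitSupNorm (deriv (deriv f)) / m := by
  have hmean : ∫ t in (0 : ℝ)..1, (smoothProjection m f t - f t) = 0 := by
    rw [intervalIntegral.integral_sub ((continuous m f).intervalIntegrable 0 1)
      (hf.continuous.intervalIntegrable 0 1), integral_eq, sub_self]
  have := abs_le_mul_of_integral_eq_zero zero_lt_one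
    (fun y _ =>
      ((hasDerivAt m f y).sub (hf.differentiable two_ne_zero y).hasDerivAt).hasDerivWithinAt)
    (fun y hy => by rw [abs_sub_comm]; exact abs_deriv_sub_hermiteInterp_le hf hm hy) hmean hx
  rwa [sub_zero, mul_one] at this

lemma unitSupNorm_le_add (hf : ContDiff ℝ 2 f) (hm : 0 < m) :
    unitSupNorm (smoothProjection m f) ≤ unitSupNorm f + unitSupNorm (deriv (deriv f)) / m := by
  have hC : 0 ≤ unitSupNorm f + unitSupNorm (deriv (deriv f)) / m := by
    positivity [unitSupNorm_nonneg f, unitSupNorm_nonneg (deriv (deriv f))]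
  refine unitSupNorm_le hC fun x hx => ?_
  calc |smoothProjection m f x| ≤ |f x| + |smoothProjection m f x - f x| := by
        simpa using abs_add_le (f x) (smoothProjection m f x - f x)
    _ ≤ _ := add_le_add (abs_le_unitSupNorm hf.continuous.continuousOn hx) (abs_sub_le hf hm hx)

lemma unitSupNorm_sub_add_le (hf : ContDiff ℝ 2 f) (hm : 0 < m) :
    unitSupNorm (fun x => smoothProjection m f x - f x) +
        unitSupNorm (fun x => hermiteInterp m (fun i : ℕ => deriv f (i / m)) x - deriv f x) ≤
      2 * (unitSupNorm (deriv (deriv f)) / m) := by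
  have hC : 0 ≤ unitSupNorm (deriv (deriv f)) / m := by
    positivity [unitSupNorm_nonneg (deriv (deriv f))]
  linarith [unitSupNorm_le hC fun x hx => abs_sub_le hf hm hx, unitSupNorm_le hC fun x hx =>
    (abs_sub_comm _ _).trans_le (abs_deriv_sub_hermiteInterp_le hf hm hx)]

end smoothProjection

/-- properties of the smooth integral-type projection
`Π̃_η f(x) = (∫f - I(f)) + ∫₀ˣ g̃`, with `g̃ = Σ_i f'(a_i)φ_i` and
`I(f) = Σ_i f'(a_i) ∫₀¹(∫₀ˣ φ_i)dx`, for `f ∈ C²([0,1])`: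
(1) `‖f' - g̃‖_∞ ≤ ‖f''‖_∞/m`; (2) `‖Π̃_η f - f‖_∞ ≤ ‖f''‖_∞/m`;
(3) `‖Π̃_η f - f‖_{C¹} ≤ 3‖f''‖_∞/m` (note `(Π̃_η f)' = g̃`);
(4) `∫₀¹ Π̃_η f = ∫₀¹ f`; (5) `‖Π̃_η f‖_{C²} ≤ 5‖f‖_{C²}`
(with `(Π̃_η f)' = g̃`, `(Π̃_η f)'' = g̃'`). -/
theorem stmt13
    (m : ℕ) (hm : 2 ≤ m)
    (φ : ℝ → ℝ)
    (hφ : ∀ x : ℝ, φ x =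
      if x < -1 then 0
      else if x ≤ 0 then 1 - 3 * x ^ 2 - 2 * x ^ 3
      else if x ≤ 1 then 1 - 3 * x ^ 2 + 2 * x ^ 3
      else 0)
    (f : ℝ → ℝ) (hf : ContDiff ℝ 2 f)
    (gt : ℝ → ℝ)
    (hgt : ∀ x, gt x = ∑ i ∈ Finset.range (m + 1), deriv f (i / m) * φ (m * x - i))
    (If : ℝ)
    (hIf : If = ∑ i ∈ Finset.range (m + 1),
      deriv f (i / m) * ∫ x in (0:ℝ)..1, ∫ t in (0:ℝ)..x, φ (m * t - i))
    (Pf : ℝ → ℝ)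
    (hPf : ∀ x, Pf x = ((∫ t in (0:ℝ)..1, f t) - If) + ∫ t in (0:ℝ)..x, gt t) :
    (∀ x ∈ Icc (0:ℝ) 1,
      |deriv f x - gt x| ≤ (⨆ y ∈ Icc (0:ℝ) 1, |deriv (deriv f) y|) / m) ∧
    (∀ x ∈ Icc (0:ℝ) 1,
      |Pf x - f x| ≤ (⨆ y ∈ Icc (0:ℝ) 1, |deriv (deriv f) y|) / m) ∧
    ((⨆ x ∈ Icc (0:ℝ) 1, |Pf x - f x|) + (⨆ x ∈ Icc (0:ℝ) 1, |gt x - deriv f x|)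
      ≤ 3 * (⨆ y ∈ Icc (0:ℝ) 1, |deriv (deriv f) y|) / m) ∧
    ((∫ t in (0:ℝ)..1, Pf t) = ∫ t in (0:ℝ)..1, f t) ∧
    ((⨆ x ∈ Icc (0:ℝ) 1, |Pf x|) + (⨆ x ∈ Icc (0:ℝ) 1, |gt x|)
        + (⨆ x ∈ Icc (0:ℝ) 1, |deriv gt x|)
      ≤ 5 * ((⨆ y ∈ Icc (0:ℝ) 1, |f y|) + (⨆ y ∈ Icc (0:ℝ) 1, |deriv f y|)
          + ⨆ y ∈ Icc (0:ℝ) 1, |deriv (deriv f) y|)) := by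
  have hm₀ : 0 < m := by omega
  obtain rfl : φ = hermiteBump := funext hφ
  obtain rfl : gt = hermiteInterp m (fun i : ℕ => deriv f (i / m)) := funext hgt
  subst hIf
  obtain rfl : Pf = smoothProjection m f := funext hPf
  have hM₀ := unitSupNorm_nonneg f
  have hM₁ := unitSupNorm_nonneg (deriv f)
  have hM₂ := unitSupNorm_nonneg (deriv (deriv f))
  have hM₂m : unitSupNorm (deriv (deriv f)) / m ≤ unitSupNorm (deriv (deriv f)) :=
    div_le_self hM₂ (by exact_mod_cast hm₀)
  refine ⟨fun x hx => abs_deriv_sub_hermiteInterp_le hf hm₀ hx,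
    fun x hx => smoothProjection.abs_sub_le hf hm₀ hx, ?_, smoothProjection.integral_eq m f, ?_⟩
  · change unitSupNorm _ + unitSupNorm _ ≤ 3 * unitSupNorm (deriv (deriv f)) / m
    rw [mul_div_assoc]
    linarith [smoothProjection.unitSupNorm_sub_add_le hf hm₀,
      div_nonneg hM₂ (Nat.cast_nonneg m)]
  · change unitSupNorm _ + unitSupNorm _ + unitSupNorm _ ≤
      5 * (unitSupNorm f + unitSupNorm (deriv f) + unitSupNorm (deriv (deriv f)))
    linarith [smoothProjection.unitSupNorm_le_add hf hm₀, unitSupNorm_hermiteInterp_le hf hm₀,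
      unitSupNorm_deriv_hermiteInterp_le hf hm₀]
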